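/- arXiv:2101.05882 — 3 statements merged into one kernel-verified Lean document; each statement's English description precedes it below -/
import Mathlib

section
/- Let 0 ≤ γ < 1 and α = 4/(3+γ). There exists δ₀ > 0, depending only on γ, such that for every 0 < δ ≤ δ₀, every η ≥ 1, and every s ≥ η, one has 8δ³α³(α−1) s^{−αγ} ≤ (2δ)^{−γ}(2(s^α − η^α/2)+1)^{−γ}; i.e., the outer piece of the barrier is a supersolution of w''(w')² ≤ w^{−γ}. -/
theorem stmt_10 (γ : ℝ) (hγ0 : 0 ≤ γ) (hγ1 : γ < 1) (α : ℝ) (hα : α = 4 / (3 + γ)) :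
    ∃ δ₀ : ℝ, 0 < δ₀ ∧ ∀ δ : ℝ, 0 < δ → δ ≤ δ₀ → ∀ η : ℝ, 1 ≤ η → ∀ s : ℝ, η ≤ s →
      8 * δ ^ 3 * α ^ 3 * (α - 1) * s ^ (-(α * γ))
        ≤ (2 * δ) ^ (-γ) * (2 * (s ^ α - η ^ α / 2) + 1) ^ (-γ) := by
  have hγ3 : (0:ℝ) < 3 + γ := by linarith
  have hα1 : 1 < α := by
    rw [hα, lt_div_iff₀ hγ3]; linarith
  have hα2 : α ≤ 4/3 := by
    rw [hα, div_le_div_iff₀ hγ3 (by norm_num)]; linarith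
  have hαpos : 0 < α := by linarith
  refine ⟨1/4, by norm_num, fun δ hδ hδ₀ η hη s hs => ?_⟩
  have hs1 : (1:ℝ) ≤ s := le_trans hη hs
  have hs0 : 0 < s := by linarith
  have hη0 : 0 < η := by linarith
  have hsαpos : 0 < s ^ α := Real.rpow_pos_of_pos hs0 α
  have hηα : 1 ≤ η ^ α := by
    have := Real.rpow_le_rpow_of_exponent_le hη (le_of_lt hαpos) (y := 0)
    rwa [Real.rpow_zero] at this
  have hsη : η ^ α ≤ s ^ α := Real.rpow_le_rpow hη0.le hs hαpos.le
  set X : ℝ := 2 * (s ^ α - η ^ α / 2) + 1 with hXdef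
  have hXpos : 0 < X := by simp only [hXdef]; nlinarith
  have hXle : X ≤ 2 * s ^ α := by simp only [hXdef]; nlinarith
  have h1 : (2 * s ^ α) ^ (-γ) ≤ X ^ (-γ) :=
    Real.rpow_le_rpow_of_nonpos hXpos hXle (by linarith)
  have h2 : (2 * s ^ α) ^ (-γ) = 2 ^ (-γ) * s ^ (-(α * γ)) := by
    rw [Real.mul_rpow (by norm_num) hsαpos.le, ← Real.rpow_mul hs0.le]
    congr 1; ring
  have h3 : (1:ℝ) ≤ (2 * δ) ^ (-γ) := by
    apply Real.one_le_rpow_of_pos_of_le_one_of_nonpos (by linarith) (by linarith) (by linarith)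
  have h4 : (1/2 : ℝ) ≤ 2 ^ (-γ) := by
    have := Real.rpow_le_rpow_of_exponent_le (x := 2) one_le_two (y := -1) (z := -γ) (by linarith)
    rwa [Real.rpow_neg_one, ← one_div] at this
  have hspos : 0 < s ^ (-(α * γ)) := Real.rpow_pos_of_pos hs0 _
  have hd3 : δ ^ 3 ≤ (1/4 : ℝ) ^ 3 := pow_le_pow_left₀ hδ.le hδ₀ 3
  have ha3 : α ^ 3 ≤ (4/3 : ℝ) ^ 3 := pow_le_pow_left₀ (by linarith) hα2 3
  have hC : 8 * δ ^ 3 * α ^ 3 * (α - 1) ≤ 1/2 := by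
    nlinarith [pow_pos hδ 3, pow_pos hαpos 3, mul_pos (pow_pos hδ 3) (pow_pos hαpos 3)]
  have step1 : 8 * δ ^ 3 * α ^ 3 * (α - 1) * s ^ (-(α * γ))
      ≤ (2 * δ) ^ (-γ) * (2 ^ (-γ) * s ^ (-(α * γ))) := by
    have h5 : (1/2 : ℝ) * s ^ (-(α * γ)) ≤ (2 * δ) ^ (-γ) * (2 ^ (-γ) * s ^ (-(α * γ))) := by
      have : (1/2 : ℝ) * s ^ (-(α * γ)) ≤ 2 ^ (-γ) * s ^ (-(α * γ)) :=
        mul_le_mul_of_nonneg_right h4 hspos.le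
      nlinarith [mul_pos (mul_pos (lt_of_lt_of_le one_half_pos h4) hspos) (lt_of_lt_of_le one_pos h3)]
    calc 8 * δ ^ 3 * α ^ 3 * (α - 1) * s ^ (-(α * γ))
        ≤ (1/2) * s ^ (-(α * γ)) := mul_le_mul_of_nonneg_right hC hspos.le
      _ ≤ _ := h5
  calc 8 * δ ^ 3 * α ^ 3 * (α - 1) * s ^ (-(α * γ))
      ≤ (2 * δ) ^ (-γ) * (2 ^ (-γ) * s ^ (-(α * γ))) := step1
    _ = (2 * δ) ^ (-γ) * (2 * s ^ α) ^ (-γ) := by rw [h2]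
    _ ≤ (2 * δ) ^ (-γ) * X ^ (-γ) :=
        mul_le_mul_of_nonneg_left h1 (Real.rpow_nonneg (by linarith) _)
end

section
/- Under the growth and nondegeneracy hypotheses of the previous statement, there exists a constant c' > 0 (depending only on c, C, α, n) such that for every x ∈ {u > 0} and admissible radius κ, the Lebesgue measure satisfies ℒⁿ(B_κ(x) ∩ {u>0}) ≥ c' ℒⁿ(B_κ(x)). -/
/-!
Nondegeneracy gives, inside `B_κ(x)`, a point `z₀` with `u(z₀) ≥ cκ^α`. If `u` vanished at a point
in `B_r(z₀)`, the segment from `z₀` to that point would cross the free boundary at some `z` with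
`|z - z₀| < r`, and upper growth at `z` would force `u(z₀) ≤ C r^α`. For `r = (c/C)^{1/α} κ/2`
this is smaller than `cκ^α`, so `B_r(z₀) ⊆ {u > 0}`. A ball of radius `r/2` fits in
`B_κ(x) ∩ B_r(z₀)`, and scaling of Lebesgue measure gives the density bound `((c/C)^{1/α}/4)^n`.
-/

open Metric MeasureTheory Set

theorem IsPreconnected.inter_frontier_nonempty {X : Type*} [TopologicalSpace X] {s t : Set X}
    (hs : IsPreconnected s) (hst : (s ∩ t).Nonempty) (hst' : (s \ t).Nonempty) :
    (s ∩ frontier t).Nonempty := by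
  by_contra h
  have hfr : ∀ x ∈ s, x ∉ frontier t := fun x hx hxf => h ⟨x, hx, hxf⟩
  have hin : ∀ x ∈ s, x ∈ t → x ∈ interior t := fun x hx hxt => by
    by_contra hxi
    exact hfr x hx ⟨subset_closure hxt, hxi⟩
  have hout : ∀ x ∈ s, x ∉ t → x ∈ interior tᶜ := fun x hx hxt => by
    rw [interior_compl]
    exact fun hxc => hfr x hx ⟨hxc, fun hxi => hxt (interior_subset hxi)⟩
  have hcover : s ⊆ interior t ∪ interior tᶜ := fun x hx => by
    by_cases hxt : x ∈ t
    exacts [Or.inl (hin x hx hxt), Or.inr (hout x hx hxt)]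
  obtain ⟨x, -, hxt, hxt'⟩ := hs _ _ isOpen_interior isOpen_interior hcover
    (hst.mono fun x hx => ⟨hx.1, hin x hx.1 hx.2⟩)
    (hst'.mono fun x hx => ⟨hx.1, hout x hx.1 hx.2⟩)
  exact interior_subset hxt' (interior_subset hxt)

section FreeBoundary

variable {E : Type*} [NormedAddCommGroup E] [NormedSpace ℝ E]

theorem ball_subset_setOf_pos_of_growth {u : E → ℝ} {Ω : Set E} {z₀ : E} {r M : ℝ}
    (hgrowth : ∀ z ∈ frontier {y | 0 < u y} ∩ Ω, closedBall z r ⊆ Ω → ∀ y ∈ ball z r, u y ≤ M)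
    (hΩ : closedBall z₀ (2 * r) ⊆ Ω) (hM : 0 ≤ M) (hz₀ : M < u z₀) :
    ball z₀ r ⊆ {y | 0 < u y} := by
  intro y hy
  by_contra hy_nonpos
  obtain ⟨z, hz_seg, hz_fr⟩ := (convex_segment z₀ y).isPreconnected.inter_frontier_nonempty
    ⟨z₀, left_mem_segment ℝ z₀ y, hM.trans_lt hz₀⟩ ⟨y, right_mem_segment ℝ z₀ y, hy_nonpos⟩
  have hz : dist z z₀ < r := (convex_ball z₀ r).segment_subset (mem_ball_self (pos_of_mem_ball hy))
    hy hz_seg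
  have hz_Ω : closedBall z r ⊆ Ω := (closedBall_subset_closedBall' (by linarith)).trans hΩ
  have hz₀_le := hgrowth z ⟨hz_fr, hz_Ω (mem_closedBall_self (pos_of_mem_ball hy).le)⟩ hz_Ω z₀
    (mem_ball_comm.mp hz)
  linarith

theorem exists_ball_subset_ball_inter_ball {x z : E} {R r : ℝ} (hR : 0 < R) (hr : 0 ≤ r)
    (hrR : r ≤ 2 * R) (hzx : dist z x ≤ R) :
    ∃ m, ball m (r / 2) ⊆ ball x R ∩ ball z r := by
  set t := r / (2 * R)
  have ht0 : 0 ≤ t := by positivity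
  have ht1 : t ≤ 1 := div_le_one_of_le₀ hrR (by positivity)
  have htR : t * R = r / 2 := by simp only [t]; field_simp
  refine ⟨AffineMap.lineMap z x t, subset_inter (ball_subset_ball' ?_) (ball_subset_ball' ?_)⟩
  · rw [dist_lineMap_right, Real.norm_of_nonneg (sub_nonneg.mpr ht1)]
    nlinarith [mul_le_mul_of_nonneg_left (dist_comm z x ▸ hzx) (sub_nonneg.mpr ht1)]
  · rw [dist_lineMap_left, Real.norm_of_nonneg ht0]
    nlinarith [mul_le_mul_of_nonneg_left hzx ht0]

theorem ofReal_pow_mul_measure_ball_le_measure_ball_inter [MeasurableSpace E] [BorelSpace E]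
    [FiniteDimensional ℝ E] (μ : Measure E) [μ.IsAddHaarMeasure] {S : Set E} {x z : E} {R s : ℝ}
    (hR : 0 < R) (hs : 0 < s) (hs2 : s ≤ 2) (hzx : dist z x ≤ R) (hS : ball z (s * R) ⊆ S) :
    ENNReal.ofReal ((s / 2) ^ Module.finrank ℝ E) * μ (ball x R) ≤ μ (ball x R ∩ S) := by
  obtain ⟨m, hm⟩ :=
    exists_ball_subset_ball_inter_ball (r := s * R) hR (by positivity) (by nlinarith) hzx
  calc ENNReal.ofReal ((s / 2) ^ Module.finrank ℝ E) * μ (ball x R)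
      = μ (ball m (s * R / 2)) := by
        rw [mul_div_right_comm, Measure.addHaar_ball_mul_of_pos μ m (by positivity),
          Measure.addHaar_ball_center μ x]
    _ ≤ μ (ball x R ∩ S) := measure_mono (hm.trans (inter_subset_inter_right _ hS))

end FreeBoundary

theorem stmt_14_general {n : ℕ} (Ω : Set (EuclideanSpace ℝ (Fin n)))
    (u : EuclideanSpace ℝ (Fin n) → ℝ)
    (c C α : ℝ) (hc : 0 < c) (hcC : c ≤ C) (hα : 0 < α)
    (hgrowth : ∀ z ∈ frontier {y | 0 < u y} ∩ Ω, ∀ d : ℝ, 0 < d →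
      closedBall z d ⊆ Ω → ∀ y ∈ ball z d, u y ≤ C * d ^ α)
    (hnd : ∀ x, 0 < u x → ∀ κ : ℝ, 0 < κ → closedBall x (2 * κ) ⊆ Ω →
      ∃ z₀ ∈ closedBall x κ, c * κ ^ α ≤ u z₀) :
    ∃ c' : ℝ, 0 < c' ∧ ∀ x : EuclideanSpace ℝ (Fin n), 0 < u x →
      ∀ κ : ℝ, 0 < κ → closedBall x (2 * κ) ⊆ Ω →
        ENNReal.ofReal c' * volume (ball x κ) ≤ volume (ball x κ ∩ {y | 0 < u y}) := by
  have hC : 0 < C := hc.trans_le hcC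
  set s := (c / C) ^ α⁻¹
  have hs0 : 0 < s := by positivity
  have hs1 : s ≤ 1 := Real.rpow_le_one (by positivity) (div_le_one_of_le₀ hcC hC.le) (by positivity)
  have hCs : C * s ^ α = c := by
    rw [Real.rpow_inv_rpow (by positivity) hα.ne', mul_div_cancel₀ _ hC.ne']
  refine ⟨(s / 2 / 2) ^ n, by positivity, fun x hx κ hκ hΩ => ?_⟩
  obtain ⟨z₀, hz₀x, hz₀⟩ := hnd x hx κ hκ hΩ
  have hz₀_Ω : closedBall z₀ (2 * (s / 2 * κ)) ⊆ Ω :=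
    (closedBall_subset_closedBall' (by nlinarith [mem_closedBall.mp hz₀x])).trans hΩ
  have hz₀_large : C * (s / 2 * κ) ^ α < u z₀ := calc
    C * (s / 2 * κ) ^ α = c * (κ / 2) ^ α := by
      rw [div_mul_comm, mul_comm _ s, Real.mul_rpow hs0.le (by positivity), ← mul_assoc, hCs]
    _ < c * κ ^ α := mul_lt_mul_of_pos_left (Real.rpow_lt_rpow (by positivity) (by linarith) hα) hc
    _ ≤ u z₀ := hz₀
  have hball : ball z₀ (s / 2 * κ) ⊆ {y | 0 < u y} :=
    ball_subset_setOf_pos_of_growth (fun z hz hzΩ => hgrowth z hz _ (by positivity) hzΩ) hz₀_Ω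
      (by positivity) hz₀_large
  simpa only [finrank_euclideanSpace_fin] using ofReal_pow_mul_measure_ball_le_measure_ball_inter
    volume hκ (by positivity) (by linarith) (mem_closedBall.mp hz₀x) hball

theorem stmt_14 {n : ℕ} (Ω : Set (EuclideanSpace ℝ (Fin n))) (hΩ : IsOpen Ω)
    (u : EuclideanSpace ℝ (Fin n) → ℝ) (hu : Continuous u) (hpos : ∀ x, 0 ≤ u x)
    (c C α : ℝ) (hc : 0 < c) (hcC : c ≤ C) (hα : 0 < α)
    (hgrowth : ∀ z ∈ frontier {y | 0 < u y} ∩ Ω, ∀ d : ℝ, 0 < d →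
      closedBall z d ⊆ Ω → ∀ y ∈ ball z d, u y ≤ C * d ^ α)
    (hnd : ∀ x, 0 < u x → ∀ κ : ℝ, 0 < κ → closedBall x (2 * κ) ⊆ Ω →
      ∃ z₀ ∈ closedBall x κ, c * κ ^ α ≤ u z₀) :
    ∃ c' : ℝ, 0 < c' ∧ ∀ x : EuclideanSpace ℝ (Fin n), 0 < u x →
      ∀ κ : ℝ, 0 < κ → closedBall x (2 * κ) ⊆ Ω →
        ENNReal.ofReal c' * volume (ball x κ) ≤ volume (ball x κ ∩ {y | 0 < u y}) :=
  stmt_14_general Ω u c C α hc hcC hα hgrowth hnd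
end

section
/- Let 0 ≤ γ < 1, α = 4/(3+γ), C_α = (α³(α−1))^{−1/(3+γ)}, and C, R > 0 with R = (C/C_α)^{1/α}. Then the radial function ω(x) = C_α |x|^α on the ball B_R ⊂ ℝⁿ satisfies ω = C on ∂B_R, ω > 0 on B_R \ {0}, and at every x ≠ 0 where ω is twice differentiable, Δ_∞ ω(x) = ω(x)^{−γ}. -/
/-!
The gradient of `b * ‖x‖ ^ p` is the radial field `(b * p) • ‖x‖ ^ (p - 2) • x`, and
differentiating it once more gives `Δ_∞ (b * ‖x‖ ^ p) = b³ p³ (p - 1) ‖x‖ ^ (3p - 4)`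
away from the origin. The exponent `α = 4 / (3 + γ)` is exactly the one with `3α - 4 = -αγ`,
and `C_α` is normalised so that `C_α³ α³ (α - 1) = C_α ^ (-γ)`; together these turn the
formula into `ω ^ (-γ)`.
-/

open Metric

noncomputable def infLap {n : ℕ} (u : EuclideanSpace ℝ (Fin n) → ℝ)
    (x : EuclideanSpace ℝ (Fin n)) : ℝ :=
  inner ℝ (fderiv ℝ (gradient u) x (gradient u x)) (gradient u x)

open Real
open scoped RealInnerProductSpace

section RadialPower

variable {E : Type*} [NormedAddCommGroup E] [InnerProductSpace ℝ E] {x : E}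

theorem hasFDerivAt_norm_rpow_of_ne_zero (hx : x ≠ 0) (p : ℝ) :
    HasFDerivAt (fun y : E ↦ ‖y‖ ^ p) ((p * ‖x‖ ^ (p - 2)) • innerSL ℝ x) x := by
  convert! ((hasStrictFDerivAt_norm_sq x).rpow_const (p := p / 2) (by simp [hx])).hasFDerivAt
    using 0
  simp_rw [← rpow_natCast_mul (norm_nonneg _), ← Nat.cast_smul_eq_nsmul ℝ, smul_smul]
  ring_nf

theorem hasFDerivAt_norm_rpow_smul (hx : x ≠ 0) (q : ℝ) :
    HasFDerivAt (fun y : E ↦ ‖y‖ ^ q • y)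
      (‖x‖ ^ q • ContinuousLinearMap.id ℝ E +
        ((q * ‖x‖ ^ (q - 2)) • innerSL ℝ x).smulRight x) x :=
  (hasFDerivAt_norm_rpow_of_ne_zero hx q).smul (hasFDerivAt_id x)

theorem inner_fderiv_norm_rpow_smul_self (hx : x ≠ 0) (q : ℝ) :
    ⟪fderiv ℝ (fun y : E ↦ ‖y‖ ^ q • y) x x, x⟫ = (q + 1) * ‖x‖ ^ (q + 2) := by
  have hr : 0 < ‖x‖ := norm_pos_iff.2 hx
  rw [(hasFDerivAt_norm_rpow_smul hx q).fderiv]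
  simp only [add_apply, smul_apply, ContinuousLinearMap.coe_id', id,
    ContinuousLinearMap.smulRight_apply, innerSL_apply_apply, real_inner_smul_left,
    inner_add_left, real_inner_self_eq_norm_sq, smul_eq_mul]
  rw [rpow_sub hr, rpow_add hr]
  simp only [rpow_ofNat]
  field_simp
  ring

variable [CompleteSpace E]

theorem hasGradientAt_mul_norm_rpow (hx : x ≠ 0) (b p : ℝ) :
    HasGradientAt (fun y : E ↦ b * ‖y‖ ^ p) ((b * p) • ‖x‖ ^ (p - 2) • x) x := by
  rw [hasGradientAt_iff_hasFDerivAt]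
  refine ((hasFDerivAt_norm_rpow_of_ne_zero hx p).const_mul b).congr_fderiv ?_
  ext v
  simp
  ring

end RadialPower

open Filter Topology in
theorem infLap_const_mul_norm_rpow {n : ℕ} {x : EuclideanSpace ℝ (Fin n)} (hx : x ≠ 0)
    (b p : ℝ) :
    infLap (fun y ↦ b * ‖y‖ ^ p) x = b ^ 3 * p ^ 3 * (p - 1) * ‖x‖ ^ (3 * p - 4) := by
  have hgrad : gradient (fun y : EuclideanSpace ℝ (Fin n) ↦ b * ‖y‖ ^ p) =ᶠ[𝓝 x]
      fun y ↦ (b * p) • ‖y‖ ^ (p - 2) • y := by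
    filter_upwards [isOpen_ne.mem_nhds hx] with y hy
    exact (hasGradientAt_mul_norm_rpow hy b p).gradient
  unfold infLap
  rw [hgrad.fderiv_eq, hgrad.eq_of_nhds,
    fderiv_fun_const_smul (hasFDerivAt_norm_rpow_smul hx (p - 2)).differentiableAt]
  simp only [smul_apply, map_smul, real_inner_smul_left, real_inner_smul_right,
    inner_fderiv_norm_rpow_smul_self hx]
  have hr : 0 < ‖x‖ := norm_pos_iff.2 hx
  rw [show 3 * p - 4 = (p - 2) + (p - 2) + (p - 2 + 2) by ring]
  simp only [rpow_add hr]
  ring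

theorem rpow_neg_inv_pow_mul_self {K s : ℝ} (hK : 0 < K) (hs : s ≠ 0) (k : ℕ) :
    (K ^ (-(1 / s))) ^ k * K = (K ^ (-(1 / s))) ^ ((k : ℝ) - s) := by
  have hK_eq : K = (K ^ (-(1 / s))) ^ (-s) := by
    rw [← rpow_mul hK.le, show -(1 / s) * -s = 1 by field_simp, rpow_one]
  set c := K ^ (-(1 / s))
  have hc : 0 < c := rpow_pos_of_pos hK _
  rw [hK_eq, ← rpow_natCast, ← rpow_add hc, sub_eq_add_neg]

theorem stmt_15_general {n : ℕ} (γ : ℝ) (hγ0 : 0 ≤ γ) (hγ1 : γ < 1) (α Cα C R : ℝ)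
    (hα : α = 4 / (3 + γ)) (hCα : Cα = (α ^ 3 * (α - 1)) ^ (-(1 / (3 + γ)) : ℝ))
    (hC : 0 < C) (hRC : R = (C / Cα) ^ (1 / α))
    (ω : EuclideanSpace ℝ (Fin n) → ℝ) (hω : ∀ x, ω x = Cα * ‖x‖ ^ α) :
    (∀ x : EuclideanSpace ℝ (Fin n), ‖x‖ = R → ω x = C) ∧
    (∀ x : EuclideanSpace ℝ (Fin n), x ≠ 0 → ‖x‖ < R → 0 < ω x) ∧
    (∀ x : EuclideanSpace ℝ (Fin n), x ≠ 0 → ContDiffAt ℝ 2 ω x →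
      infLap ω x = ω x ^ (-γ)) := by
  obtain rfl : ω = fun x ↦ Cα * ‖x‖ ^ α := funext hω
  have hγ3 : 0 < 3 + γ := by linarith
  have hαγ : α * (3 + γ) = 4 := by rw [hα]; field_simp
  have hα1 : 1 < α := by nlinarith
  have hK : 0 < α ^ 3 * (α - 1) := mul_pos (pow_pos (by linarith) 3) (by linarith)
  have hCα0 : 0 < Cα := hCα ▸ rpow_pos_of_pos hK _
  refine ⟨fun x hx ↦ ?_, fun x hx _ ↦ by positivity, fun x hx _ ↦ ?_⟩
  · dsimp only
    rw [hx, hRC, one_div, rpow_inv_rpow (div_pos hC hCα0).le (by linarith),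
      mul_div_cancel₀ _ hCα0.ne']
  · dsimp only
    have hr : 0 < ‖x‖ := norm_pos_iff.2 hx
    have hconst : Cα ^ 3 * (α ^ 3 * (α - 1)) = Cα ^ (-γ) := by
      rw [hCα, rpow_neg_inv_pow_mul_self hK hγ3.ne']
      norm_num
    rw [infLap_const_mul_norm_rpow hx, mul_rpow hCα0.le (rpow_nonneg hr.le _), ← rpow_mul hr.le,
      ← hconst, show α * -γ = 3 * α - 4 by linarith]
    ring

theorem stmt_15 {n : ℕ} (γ : ℝ) (hγ0 : 0 ≤ γ) (hγ1 : γ < 1) (α Cα C R : ℝ)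
    (hα : α = 4 / (3 + γ)) (hCα : Cα = (α ^ 3 * (α - 1)) ^ (-(1 / (3 + γ)) : ℝ))
    (hC : 0 < C) (hR : 0 < R) (hRC : R = (C / Cα) ^ (1 / α))
    (ω : EuclideanSpace ℝ (Fin n) → ℝ) (hω : ∀ x, ω x = Cα * ‖x‖ ^ α) :
    (∀ x : EuclideanSpace ℝ (Fin n), ‖x‖ = R → ω x = C) ∧
    (∀ x : EuclideanSpace ℝ (Fin n), x ≠ 0 → ‖x‖ < R → 0 < ω x) ∧
    (∀ x : EuclideanSpace ℝ (Fin n), x ≠ 0 → ContDiffAt ℝ 2 ω x →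
      infLap ω x = ω x ^ (-γ)) :=
  stmt_15_general γ hγ0 hγ1 α Cα C R hα hCα hC hRC ω hω
end
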